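/- Information cost lower bound for Equality: let k ≥ 1, let T be a finite transcript set with nonnegative functions a, b : {0,1}^k × T → ℝ≥0 such that π^{x,y}(τ) := a(x,τ)·b(y,τ) is a probability distribution on T for every x, y ∈ {0,1}^k, and let o : T → {0,1} be an output function such that for all x, y ∈ {0,1}^k, Σ_{τ : o(τ) ≠ EQ(x,y)} π^{x,y}(τ) ≤ 1/3, where EQ(x,y) = 1 iff x = y. Let X, Y be independent uniform random variables on {0,1}^k and let Π be a random transcript distributed as π^{X,Y} given (X,Y). Then I(X : Π | Y) + I(Y : Π | X) ≥ 1/432. -/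

import Mathlib

open Finset

/-- Distribution of the random variable `f` on a finite probability space `(Ω, p)`. -/
noncomputable def distOf {Ω T : Type} [Fintype Ω] [Fintype T] [DecidableEq T]
    (p : Ω → ℝ) (f : Ω → T) : T → ℝ :=
  fun t => ∑ ω, if f ω = t then p ω else 0

/-- Shannon entropy (base-2) of a distribution on a finite set. -/
noncomputable def shannonEnt {T : Type} [Fintype T] (q : T → ℝ) : ℝ :=
  -∑ t, q t * Real.logb 2 (q t)

/-- Entropy `H(f)` of a random variable `f` on `(Ω, p)`. -/
noncomputable def Hrv {Ω T : Type} [Fintype Ω] [Fintype T] [DecidableEq T]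
    (p : Ω → ℝ) (f : Ω → T) : ℝ :=
  shannonEnt (distOf p f)

/-- Mutual information `I(f : g) = H(f) + H(g) − H(f,g)` on `(Ω, p)`. -/
noncomputable def mutInfo {Ω A B : Type} [Fintype Ω] [Fintype A] [DecidableEq A]
    [Fintype B] [DecidableEq B] (p : Ω → ℝ) (f : Ω → A) (g : Ω → B) : ℝ :=
  Hrv p f + Hrv p g - Hrv p (fun ω => (f ω, g ω))

/-- Conditional mutual information `I(f : g | h) = I(f : gh) − I(f : h)` on `(Ω, p)`. -/
noncomputable def condMutInfo {Ω A B C : Type} [Fintype Ω] [Fintype A] [DecidableEq A]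
    [Fintype B] [DecidableEq B] [Fintype C] [DecidableEq C]
    (p : Ω → ℝ) (f : Ω → A) (g : Ω → B) (h : Ω → C) : ℝ :=
  mutInfo p f (fun ω => (g ω, h ω)) - mutInfo p f h

/-- A private-coin randomized communication protocol on input set `I`, modelled by its
finite transcript set `T`, nonnegative functions `a, b : I → T → ℝ` such that
`π^{x,y}(τ) = a(x,τ)·b(y,τ)` is a probability distribution on `T` for every `(x,y)`
(rectangle property), and an output function `o : T → {0,1}`. -/
structure Protocol (I : Type) where
  T : Type
  [instFin : Fintype T]
  [instDec : DecidableEq T]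
  a : I → T → ℝ
  b : I → T → ℝ
  o : T → Bool
  a_nonneg : ∀ x τ, 0 ≤ a x τ
  b_nonneg : ∀ y τ, 0 ≤ b y τ
  sums_one : ∀ x y, ∑ τ, a x τ * b y τ = 1

attribute [instance] Protocol.instFin Protocol.instDec

/-- Probability that the protocol's output on input `(x, y)` differs from `v`:
`Σ_{τ : o(τ) ≠ v} π^{x,y}(τ)`. -/
noncomputable def errOn {I : Type} (P : Protocol I) (x y : I) (v : Bool) : ℝ :=
  ∑ τ ∈ Finset.univ.filter (fun τ => P.o τ ≠ v), P.a x τ * P.b y τ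

/-- The internal information cost `I(X : Π | Y) + I(Y : Π | X)` of the protocol, where
`X, Y` are independent and uniformly distributed on `I` and `Π` is the transcript,
distributed as `π^{X,Y}` given `(X,Y)`. -/
noncomputable def infoCost {I : Type} [Fintype I] [DecidableEq I] (P : Protocol I) : ℝ :=
  let p : I × I × P.T → ℝ := fun ω =>
    (Fintype.card I : ℝ)⁻¹ * (Fintype.card I : ℝ)⁻¹ * (P.a ω.1 ω.2.2 * P.b ω.2.1 ω.2.2)
  condMutInfo p (fun ω => ω.1) (fun ω => ω.2.2) (fun ω => ω.2.1)
    + condMutInfo p (fun ω => ω.2.1) (fun ω => ω.2.2) (fun ω => ω.1)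

/-!
With `X, Y` uniform, `I(X : Π | Y)` is the average over `(x, y)` of the divergence of `π x y` from
`Q y`, the average of `π · y`, and each divergence dominates the squared distance between the
square-root vectors (a squared Hellinger distance); likewise `I(Y : Π | X)` with `R x`, the
average of `π x ·`. Let `s, t, u, v` be the distances along the path
`π x y — Q y — π x' y — R x' — π x' x`. For `x ≠ x'` this path has length at least `1/3`:
a distribution accepting with probability `≥ 2/3` is at distance `≥ 1/3` from one accepting with
probability `≤ 1/3` (total variation is at most the distance), which applies to `π y y, π x y`
when `x' = y`, and otherwise to `π x x, π x' y`, whose distance equals that of the endpoints by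
the rectangle property (cut and paste). Hence `s² + t² + u² + v² ≥ 1/36`, and averaging over all
triples `(x, x', y)` gives information cost at least `(1 - 1/n) / 72 ≥ 1/144`.
-/

open Real

noncomputable def sqrtVec {T : Type} [Fintype T] (p : T → ℝ) : EuclideanSpace ℝ T :=
  WithLp.toLp 2 fun τ => √(p τ)

noncomputable def relEnt {T : Type} [Fintype T] (p q : T → ℝ) : ℝ :=
  ∑ τ, p τ * (logb 2 (p τ) - logb 2 (q τ))

noncomputable def mixture {I T : Type} [Fintype I] (p : I → T → ℝ) : T → ℝ :=
  fun τ => (Fintype.card I : ℝ)⁻¹ * ∑ x, p x τ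

section SqrtVec

variable {T : Type} [Fintype T] {p q : T → ℝ}

lemma dist_sqrtVec_sq (p q : T → ℝ) :
    dist (sqrtVec p) (sqrtVec q) ^ 2 = ∑ τ, (√(p τ) - √(q τ)) ^ 2 := by
  rw [EuclideanSpace.dist_eq, sq_sqrt (by positivity)]
  simp [sqrtVec, Real.dist_eq]

lemma dist_sqrtVec_sq_eq (hp : ∀ τ, 0 ≤ p τ) (hq : ∀ τ, 0 ≤ q τ) :
    dist (sqrtVec p) (sqrtVec q) ^ 2 = ∑ τ, p τ + ∑ τ, q τ - 2 * ∑ τ, √(p τ * q τ) := by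
  rw [dist_sqrtVec_sq, ← sum_add_distrib, mul_sum, ← sum_sub_distrib]
  refine sum_congr rfl fun τ _ => ?_
  rw [sub_sq, sq_sqrt (hp τ), sq_sqrt (hq τ), sqrt_mul (hp τ)]
  ring

lemma two_mul_sub_le_sum_abs_sub [DecidableEq T] (E : Finset T) (h : ∑ τ, p τ = ∑ τ, q τ) :
    2 * (∑ τ ∈ E, p τ - ∑ τ ∈ E, q τ) ≤ ∑ τ, |p τ - q τ| := by
  have hcompl : ∑ τ ∈ Eᶜ, (q τ - p τ) = ∑ τ ∈ E, p τ - ∑ τ ∈ E, q τ := by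
    rw [sum_sub_distrib]
    linarith [sum_add_sum_compl E p, sum_add_sum_compl E q]
  calc 2 * (∑ τ ∈ E, p τ - ∑ τ ∈ E, q τ) = ∑ τ ∈ E, (p τ - q τ) + ∑ τ ∈ Eᶜ, (q τ - p τ) := by
        rw [hcompl, sum_sub_distrib]; ring
    _ ≤ ∑ τ ∈ E, |p τ - q τ| + ∑ τ ∈ Eᶜ, |p τ - q τ| := by
        gcongr with τ _ τ _
        · exact le_abs_self _
        · exact abs_sub_comm (p τ) (q τ) ▸ le_abs_self _
    _ = ∑ τ, |p τ - q τ| := sum_add_sum_compl E _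

lemma sum_abs_sub_le_two_mul_dist_sqrtVec (hp : ∀ τ, 0 ≤ p τ) (hq : ∀ τ, 0 ≤ q τ)
    (hp1 : ∑ τ, p τ = 1) (hq1 : ∑ τ, q τ = 1) :
    ∑ τ, |p τ - q τ| ≤ 2 * dist (sqrtVec p) (sqrtVec q) := by
  have hfactor : ∀ τ, |p τ - q τ| = |√(p τ) - √(q τ)| * (√(p τ) + √(q τ)) := fun τ => by
    rw [← abs_of_nonneg (by positivity : 0 ≤ √(p τ) + √(q τ)), ← abs_mul]
    congr 1
    linear_combination sq_sqrt (hq τ) - sq_sqrt (hp τ)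
  have hsum_sq : ∑ τ, (√(p τ) + √(q τ)) ^ 2 ≤ 2 ^ 2 := by
    calc ∑ τ, (√(p τ) + √(q τ)) ^ 2 ≤ ∑ τ, 2 * (p τ + q τ) := by
          gcongr with τ
          nlinarith [sq_sqrt (hp τ), sq_sqrt (hq τ), sq_nonneg (√(p τ) - √(q τ))]
      _ = 2 ^ 2 := by rw [← mul_sum, sum_add_distrib, hp1, hq1]; norm_num
  calc ∑ τ, |p τ - q τ| = ∑ τ, |√(p τ) - √(q τ)| * (√(p τ) + √(q τ)) := by simp only [hfactor]
    _ ≤ √(∑ τ, |√(p τ) - √(q τ)| ^ 2) * √(∑ τ, (√(p τ) + √(q τ)) ^ 2) :=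
        sum_mul_le_sqrt_mul_sqrt _ _ _
    _ ≤ dist (sqrtVec p) (sqrtVec q) * 2 := by
        gcongr
        · simp only [sq_abs, ← dist_sqrtVec_sq, sqrt_sq dist_nonneg, le_refl]
        · exact sqrt_le_iff.mpr ⟨by norm_num, hsum_sq⟩
    _ = 2 * dist (sqrtVec p) (sqrtVec q) := mul_comm _ _

lemma sum_sub_sum_le_dist_sqrtVec [DecidableEq T] (E : Finset T) (hp : ∀ τ, 0 ≤ p τ)
    (hq : ∀ τ, 0 ≤ q τ) (hp1 : ∑ τ, p τ = 1) (hq1 : ∑ τ, q τ = 1) :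
    ∑ τ ∈ E, p τ - ∑ τ ∈ E, q τ ≤ dist (sqrtVec p) (sqrtVec q) := by
  linarith [two_mul_sub_le_sum_abs_sub E (hp1.trans hq1.symm),
    sum_abs_sub_le_two_mul_dist_sqrtVec hp hq hp1 hq1]

lemma two_mul_sub_sqrt_mul_le_mul_log_sub {a b : ℝ} (ha : 0 ≤ a) (hb : 0 < a → 0 < b) :
    2 * (a - √(a * b)) ≤ a * (log a - log b) := by
  rcases ha.eq_or_lt with rfl | ha
  · simp
  have hb := hb ha
  have hlog : log a - log b = -2 * log (√b / √a) := by
    rw [log_div (sqrt_pos.2 hb).ne' (sqrt_pos.2 ha).ne', log_sqrt hb.le, log_sqrt ha.le]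
    ring
  have hratio : a * (√b / √a) = √(a * b) := by
    rw [sqrt_mul ha.le, ← sq_sqrt ha.le]
    field_simp
    rw [sqrt_sq (sqrt_nonneg a)]
  have hle := log_le_sub_one_of_pos (div_pos (sqrt_pos.2 hb) (sqrt_pos.2 ha))
  rw [hlog]
  linarith [mul_le_mul_of_nonneg_left hle ha.le]

lemma dist_sqrtVec_sq_le_relEnt (hp : ∀ τ, 0 ≤ p τ) (hq : ∀ τ, 0 ≤ q τ)
    (hp1 : ∑ τ, p τ = 1) (hq1 : ∑ τ, q τ = 1) (hsupp : ∀ τ, 0 < p τ → 0 < q τ) :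
    dist (sqrtVec p) (sqrtVec q) ^ 2 ≤ relEnt p q := by
  have hnat : dist (sqrtVec p) (sqrtVec q) ^ 2 ≤ ∑ τ, p τ * (log (p τ) - log (q τ)) := by
    rw [dist_sqrtVec_sq_eq hp hq, hp1, hq1, (by linarith : (1 : ℝ) + 1 = 2 * ∑ τ, p τ),
      ← mul_sub, ← sum_sub_distrib, mul_sum]
    exact sum_le_sum fun τ _ => two_mul_sub_sqrt_mul_le_mul_log_sub (hp τ) (hsupp τ)
  have hrel : relEnt p q = (∑ τ, p τ * (log (p τ) - log (q τ))) / log 2 := by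
    simp only [relEnt, logb, ← sub_div, mul_div_assoc, sum_div]
  rw [hrel]
  exact hnat.trans (le_div_self ((sq_nonneg _).trans hnat) (log_pos one_lt_two)
    (log_two_lt_d9.le.trans (by norm_num)))

end SqrtVec

section Entropy

lemma shannonEnt_const (α : Type) [Fintype α] (c : ℝ) :
    shannonEnt (fun _ : α => c) = -(Fintype.card α * (c * logb 2 c)) := by
  simp [shannonEnt]

lemma shannonEnt_const_mul {T : Type} [Fintype T] (w : T → ℝ) {c : ℝ} (hc : c ≠ 0) :
    shannonEnt (fun t => c * w t) = c * shannonEnt w - c * (∑ t, w t) * logb 2 c := by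
  have h : ∀ t, c * w t * logb 2 (c * w t) = c * (w t * logb 2 (w t)) + c * w t * logb 2 c := by
    intro t
    rcases eq_or_ne (w t) 0 with h0 | h0
    · simp [h0]
    · rw [logb_mul hc h0]; ring
  simp only [shannonEnt, h, sum_add_distrib, ← mul_sum, ← sum_mul]
  ring

lemma shannonEnt_prod {α β : Type} [Fintype α] [Fintype β] (f : α × β → ℝ) :
    shannonEnt f = ∑ a, shannonEnt fun b => f (a, b) := by
  simp [shannonEnt, Fintype.sum_prod_type]

lemma shannonEnt_prod_right {α β : Type} [Fintype α] [Fintype β] (f : α × β → ℝ) :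
    shannonEnt f = ∑ b, shannonEnt fun a => f (a, b) := by
  simp [shannonEnt, Fintype.sum_prod_type_right]

end Entropy

section Mixture

variable {I T : Type} [Fintype I] {p : I → T → ℝ}

lemma card_mul_mixture [Nonempty I] (τ : T) :
    (Fintype.card I : ℝ) * mixture p τ = ∑ x, p x τ := by
  simp [mixture]

lemma mixture_nonneg (hp : ∀ x τ, 0 ≤ p x τ) (τ : T) : 0 ≤ mixture p τ :=
  mul_nonneg (by positivity) (sum_nonneg fun x _ => hp x τ)

lemma sum_mixture [Fintype T] [Nonempty I] (hp1 : ∀ x, ∑ τ, p x τ = 1) :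
    ∑ τ, mixture p τ = 1 := by
  simp [mixture, ← mul_sum, sum_comm (f := fun τ x => p x τ), hp1]

lemma mixture_pos [Nonempty I] (hp : ∀ x τ, 0 ≤ p x τ) {x : I} {τ : T} (h : 0 < p x τ) :
    0 < mixture p τ :=
  mul_pos (by positivity) (h.trans_le (single_le_sum (fun x _ => hp x τ) (mem_univ x)))

lemma sum_shannonEnt_mixture_sub [Fintype T] [Nonempty I] (p : I → T → ℝ) :
    ∑ x, (shannonEnt (mixture p) - shannonEnt (p x)) = ∑ x, relEnt (p x) (mixture p) := by
  have hcross : ∑ x, ∑ τ, p x τ * logb 2 (mixture p τ) = ∑ _x : I, -shannonEnt (mixture p) := by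
    rw [sum_comm]
    simp [shannonEnt, ← sum_mul, ← card_mul_mixture, mul_sum, mul_assoc]
  simp only [relEnt, mul_sub, sum_sub_distrib, hcross, shannonEnt, sum_neg_distrib]
  ring

lemma sum_dist_sqrtVec_mixture_sq_le [Fintype T] [Nonempty I] (hp : ∀ x τ, 0 ≤ p x τ)
    (hp1 : ∀ x, ∑ τ, p x τ = 1) :
    ∑ x, dist (sqrtVec (p x)) (sqrtVec (mixture p)) ^ 2
      ≤ ∑ x, (shannonEnt (mixture p) - shannonEnt (p x)) := by
  rw [sum_shannonEnt_mixture_sub]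
  exact sum_le_sum fun x _ => dist_sqrtVec_sq_le_relEnt (hp x) (mixture_nonneg hp) (hp1 x)
    (sum_mixture hp1) fun τ => mixture_pos hp

end Mixture

lemma condMutInfo_comp_equiv {Ω Ω' A B C : Type} [Fintype Ω] [Fintype Ω'] [Fintype A]
    [DecidableEq A] [Fintype B] [DecidableEq B] [Fintype C] [DecidableEq C]
    (e : Ω' ≃ Ω) (p : Ω → ℝ) (f : Ω → A) (g : Ω → B) (h : Ω → C) :
    condMutInfo (p ∘ e) (f ∘ e) (g ∘ e) (h ∘ e) = condMutInfo p f g h := by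
  have hdist : ∀ {S : Type} [Fintype S] [DecidableEq S] (k : Ω → S),
      distOf (p ∘ e) (k ∘ e) = distOf p k := fun k => funext fun t =>
    e.sum_comp fun ω => if k ω = t then p ω else 0
  simp only [condMutInfo, mutInfo, Hrv]
  rw [← hdist f, ← hdist h, ← hdist fun ω => (g ω, h ω), ← hdist fun ω => (f ω, g ω, h ω),
    ← hdist fun ω => (f ω, h ω)]
  rfl

section CondMutInfo

variable {I T : Type} [Fintype I] [DecidableEq I] [Nonempty I] [Fintype T] [DecidableEq T]

lemma condMutInfo_eq_sum_sub (w : I → I → T → ℝ) (hw1 : ∀ x y, ∑ τ, w x y τ = 1) :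
    condMutInfo
        (fun ω : I × I × T =>
          (Fintype.card I : ℝ)⁻¹ * (Fintype.card I : ℝ)⁻¹ * w ω.1 ω.2.1 ω.2.2)
        (fun ω => ω.1) (fun ω => ω.2.2) (fun ω => ω.2.1)
      = (Fintype.card I : ℝ)⁻¹ * (Fintype.card I : ℝ)⁻¹ *
        ∑ y, ∑ x, (shannonEnt (mixture fun x => w x y) - shannonEnt (w x y)) := by
  set n : ℝ := (Fintype.card I : ℝ) with hn
  have hn0 : n ≠ 0 := by positivity
  have hY : distOf (fun ω : I × I × T => n⁻¹ * n⁻¹ * w ω.1 ω.2.1 ω.2.2) (fun ω => ω.2.1)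
      = fun _ => n⁻¹ := by
    ext y
    simp [distOf, Fintype.sum_prod_type, ← mul_sum, hw1, ← hn]
    field_simp
  have hXY : distOf (fun ω : I × I × T => n⁻¹ * n⁻¹ * w ω.1 ω.2.1 ω.2.2) (fun ω => (ω.1, ω.2.1))
      = fun _ => n⁻¹ * n⁻¹ := by
    ext z
    simp [distOf, Fintype.sum_prod_type, ← mul_sum, hw1, Prod.ext_iff, ite_and]
  have hPY : distOf (fun ω : I × I × T => n⁻¹ * n⁻¹ * w ω.1 ω.2.1 ω.2.2)
      (fun ω => (ω.2.2, ω.2.1)) = fun z => n⁻¹ * mixture (fun x => w x z.2) z.1 := by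
    ext z
    simp [distOf, mixture, Fintype.sum_prod_type, ← mul_sum, Prod.ext_iff, ite_and, ← hn,
      mul_assoc]
  have hXPY : distOf (fun ω : I × I × T => n⁻¹ * n⁻¹ * w ω.1 ω.2.1 ω.2.2)
      (fun ω => (ω.1, (ω.2.2, ω.2.1))) = fun z => n⁻¹ * n⁻¹ * w z.1 z.2.2 z.2.1 := by
    ext z
    simp [distOf, Fintype.sum_prod_type, Prod.ext_iff, ite_and]
  have hQ : ∀ y, ∑ τ, mixture (fun x => w x y) τ = 1 := fun y => sum_mixture fun x => hw1 x y
  simp only [condMutInfo, mutInfo, Hrv, hY, hXY, hPY, hXPY]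
  rw [shannonEnt_prod_right (fun z : T × I => _), shannonEnt_prod (fun z : I × T × I => _)]
  simp only [shannonEnt_prod_right (fun z : T × I => _), shannonEnt_const,
    shannonEnt_const_mul _ (inv_ne_zero hn0),
    shannonEnt_const_mul _ (mul_ne_zero (inv_ne_zero hn0) (inv_ne_zero hn0)), hQ, hw1,
    Fintype.card_prod, logb_mul (inv_ne_zero hn0) (inv_ne_zero hn0), logb_inv, sum_sub_distrib,
    sum_const, card_univ, nsmul_eq_mul, ← mul_sum, Nat.cast_mul, ← hn]
  rw [sum_comm (f := fun x y => shannonEnt (w x y))]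
  field_simp
  ring

end CondMutInfo

lemma sum_sum_add_ge_of_forall_ne {I : Type} [Fintype I] [DecidableEq I] [Nonempty I]
    {A B : I → I → ℝ} (hA : ∀ x y, 0 ≤ A x y) (hB : ∀ x y, 0 ≤ B x y) {c : ℝ}
    (hc : ∀ x x' y, x ≠ x' → c ≤ A x y + A x' y + B x' y + B x' x) :
    (Fintype.card I : ℝ) * (Fintype.card I - 1) * c / 2 ≤ ∑ x, ∑ y, (A x y + B x y) := by
  set n : ℝ := (Fintype.card I : ℝ) with hn
  have hn0 : 0 < n := by positivity
  have htotal : ∑ x, ∑ x', ∑ y, (A x y + A x' y + B x' y + B x' x)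
      = 2 * n * ∑ x, ∑ y, (A x y + B x y) := by
    simp only [sum_add_distrib, sum_const, card_univ, nsmul_eq_mul, ← hn, ← mul_sum]
    rw [sum_comm (f := fun x x' => B x' x)]
    ring
  have hoff : n * (n - 1) * n * c ≤ ∑ x, ∑ x', ∑ y, (A x y + A x' y + B x' y + B x' x) := by
    calc n * (n - 1) * n * c = ∑ x : I, ∑ x' ∈ univ.erase x, ∑ _y : I, c := by
          simp [card_erase_of_mem, ← hn, Nat.cast_sub Fintype.card_pos]
          ring
      _ ≤ ∑ x, ∑ x' ∈ univ.erase x, ∑ y, (A x y + A x' y + B x' y + B x' x) := by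
          gcongr with x _ x' hx' y
          exact hc x x' y (ne_of_mem_erase hx').symm
      _ ≤ ∑ x, ∑ x', ∑ y, (A x y + A x' y + B x' y + B x' x) := by
          gcongr with x
          · exact fun x' _ _ => sum_nonneg fun y _ => by
              linarith [hA x y, hA x' y, hB x' y, hB x' x]
          · exact subset_univ _
  rw [div_le_iff₀ two_pos]
  nlinarith

namespace Protocol

variable {I : Type} (P : Protocol I)

def transcriptDist (x y : I) (τ : P.T) : ℝ := P.a x τ * P.b y τ

lemma transcriptDist_nonneg (x y : I) (τ : P.T) : 0 ≤ P.transcriptDist x y τ :=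
  mul_nonneg (P.a_nonneg x τ) (P.b_nonneg y τ)

lemma sum_transcriptDist (x y : I) : ∑ τ, P.transcriptDist x y τ = 1 := P.sums_one x y

/-- Cut and paste: `π x y · π x' y' = π x y' · π x' y` pointwise, by the rectangle property. -/
lemma dist_sqrtVec_transcriptDist_swap (x x' y y' : I) :
    dist (sqrtVec (P.transcriptDist x y)) (sqrtVec (P.transcriptDist x' y'))
      = dist (sqrtVec (P.transcriptDist x y')) (sqrtVec (P.transcriptDist x' y)) := by
  refine (pow_left_inj₀ dist_nonneg dist_nonneg two_ne_zero).1 ?_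
  simp only [dist_sqrtVec_sq_eq (P.transcriptDist_nonneg _ _) (P.transcriptDist_nonneg _ _),
    sum_transcriptDist, sub_right_inj]
  congr! 3 with τ
  simp only [transcriptDist]
  ring

lemma one_third_le_dist_sqrtVec_transcriptDist [DecidableEq I]
    (herr : ∀ x y : I, errOn P x y (decide (x = y)) ≤ 1 / 3) (x : I) {x' y' : I} (h : x' ≠ y') :
    1 / 3 ≤ dist (sqrtVec (P.transcriptDist x x)) (sqrtVec (P.transcriptDist x' y')) := by
  have hacc : ∑ τ ∈ univ.filter (fun τ => ¬P.o τ = true), P.transcriptDist x x τ ≤ 1 / 3 := by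
    simpa [errOn, transcriptDist] using herr x x
  have hrej : ∑ τ ∈ univ.filter (fun τ => P.o τ = true), P.transcriptDist x' y' τ ≤ 1 / 3 := by
    simpa [errOn, transcriptDist, h] using herr x' y'
  have hsplit := sum_filter_add_sum_filter_not univ (fun τ => P.o τ = true) (P.transcriptDist x x)
  rw [sum_transcriptDist] at hsplit
  linarith [sum_sub_sum_le_dist_sqrtVec (univ.filter fun τ => P.o τ = true)
    (P.transcriptDist_nonneg x x) (P.transcriptDist_nonneg x' y') (P.sum_transcriptDist x x)
    (P.sum_transcriptDist x' y')]

variable [Fintype I]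

noncomputable def transcriptGivenBob (y : I) : P.T → ℝ := mixture fun x => P.transcriptDist x y

noncomputable def transcriptGivenAlice (x : I) : P.T → ℝ := mixture fun y => P.transcriptDist x y

lemma one_div_thirty_six_le_sum_dist_sq [DecidableEq I]
    (herr : ∀ x y : I, errOn P x y (decide (x = y)) ≤ 1 / 3) {x x' : I} (hx : x ≠ x') (y : I) :
    1 / 36 ≤ dist (sqrtVec (P.transcriptDist x y)) (sqrtVec (P.transcriptGivenBob y)) ^ 2
      + dist (sqrtVec (P.transcriptDist x' y)) (sqrtVec (P.transcriptGivenBob y)) ^ 2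
      + dist (sqrtVec (P.transcriptDist x' y)) (sqrtVec (P.transcriptGivenAlice x')) ^ 2
      + dist (sqrtVec (P.transcriptDist x' x)) (sqrtVec (P.transcriptGivenAlice x')) ^ 2 := by
  set s := dist (sqrtVec (P.transcriptDist x y)) (sqrtVec (P.transcriptGivenBob y))
  set t := dist (sqrtVec (P.transcriptDist x' y)) (sqrtVec (P.transcriptGivenBob y))
  set u := dist (sqrtVec (P.transcriptDist x' y)) (sqrtVec (P.transcriptGivenAlice x'))
  set v := dist (sqrtVec (P.transcriptDist x' x)) (sqrtVec (P.transcriptGivenAlice x'))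
  have hst : dist (sqrtVec (P.transcriptDist x y)) (sqrtVec (P.transcriptDist x' y)) ≤ s + t :=
    dist_triangle_right _ _ _
  have huv : dist (sqrtVec (P.transcriptDist x' y)) (sqrtVec (P.transcriptDist x' x)) ≤ u + v :=
    dist_triangle_right _ _ _
  have hs : 0 ≤ s := dist_nonneg
  have ht : 0 ≤ t := dist_nonneg
  have hu : 0 ≤ u := dist_nonneg
  have hv : 0 ≤ v := dist_nonneg
  have hpath : 1 / 3 ≤ s + t + u + v := by
    by_cases hy : x' = y
    · subst hy
      have := P.one_third_le_dist_sqrtVec_transcriptDist herr x' hx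
      rw [dist_comm] at this
      linarith
    · have := P.one_third_le_dist_sqrtVec_transcriptDist herr x hy
      rw [dist_sqrtVec_transcriptDist_swap] at this
      linarith [dist_triangle (sqrtVec (P.transcriptDist x y)) (sqrtVec (P.transcriptDist x' y))
        (sqrtVec (P.transcriptDist x' x))]
  nlinarith [sq_nonneg (s - t), sq_nonneg (s - u), sq_nonneg (s - v), sq_nonneg (t - u),
    sq_nonneg (t - v), sq_nonneg (u - v)]

lemma sum_dist_sq_le_infoCost [DecidableEq I] [Nonempty I] :
    (Fintype.card I : ℝ)⁻¹ * (Fintype.card I : ℝ)⁻¹ *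
        ∑ x, ∑ y, (dist (sqrtVec (P.transcriptDist x y)) (sqrtVec (P.transcriptGivenBob y)) ^ 2
          + dist (sqrtVec (P.transcriptDist x y)) (sqrtVec (P.transcriptGivenAlice x)) ^ 2)
      ≤ infoCost P := by
  let swap : I × I × P.T ≃ I × I × P.T :=
    ⟨fun ω => (ω.2.1, ω.1, ω.2.2), fun ω => (ω.2.1, ω.1, ω.2.2), fun _ => rfl, fun _ => rfl⟩
  have hBob := condMutInfo_eq_sum_sub P.transcriptDist P.sum_transcriptDist
  have hAlice := condMutInfo_eq_sum_sub (fun y x => P.transcriptDist x y)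
    fun y x => P.sum_transcriptDist x y
  rw [← condMutInfo_comp_equiv swap] at hAlice
  rw [show infoCost P = _ from congrArg₂ (· + ·) hBob hAlice, ← mul_add]
  gcongr
  simp only [sum_add_distrib]
  rw [sum_comm (f := fun x y =>
    dist (sqrtVec (P.transcriptDist x y)) (sqrtVec (P.transcriptGivenBob y)) ^ 2)]
  exact add_le_add
    (sum_le_sum fun y _ => sum_dist_sqrtVec_mixture_sq_le (fun x => P.transcriptDist_nonneg x y)
      fun x => P.sum_transcriptDist x y)
    (sum_le_sum fun x _ => sum_dist_sqrtVec_mixture_sq_le (P.transcriptDist_nonneg x)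
      (P.sum_transcriptDist x))

end Protocol

theorem infoCost_ge_of_errOn_le {I : Type} [Fintype I] [DecidableEq I] [Nonempty I]
    (P : Protocol I) (herr : ∀ x y : I, errOn P x y (decide (x = y)) ≤ 1 / 3) :
    (1 - (Fintype.card I : ℝ)⁻¹) / 72 ≤ infoCost P := by
  have hcount := sum_sum_add_ge_of_forall_ne (fun _ _ => sq_nonneg _) (fun _ _ => sq_nonneg _)
    fun x x' y hx => P.one_div_thirty_six_le_sum_dist_sq herr hx y
  have hn : (Fintype.card I : ℝ) ≠ 0 := by positivity
  calc (1 - (Fintype.card I : ℝ)⁻¹) / 72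
      = (Fintype.card I : ℝ)⁻¹ * (Fintype.card I : ℝ)⁻¹ *
          ((Fintype.card I : ℝ) * (Fintype.card I - 1) * (1 / 36) / 2) := by
        field_simp
        ring
    _ ≤ _ := mul_le_mul_of_nonneg_left hcount (by positivity)
    _ ≤ infoCost P := P.sum_dist_sq_le_infoCost

/-- Information cost lower bound for Equality: any private-coin protocol computing
`EQ` on `{0,1}^k` with worst-case error at most `1/3` has internal information cost
at least `1/432` under independent uniform inputs. -/
theorem eq_info_lower_bound {k : ℕ} (hk : 1 ≤ k) (P : Protocol (Fin k → Bool))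
    (herr : ∀ x y : Fin k → Bool, errOn P x y (decide (x = y)) ≤ 1 / 3) :
    infoCost P ≥ 1 / 432 := by
  have hcard : (2 : ℝ) ≤ Fintype.card (Fin k → Bool) := by
    simp only [Fintype.card_fun, Fintype.card_fin, Fintype.card_bool, Nat.cast_pow,
      Nat.cast_ofNat]
    exact le_self_pow₀ (by norm_num) (by omega)
  have hinv : (Fintype.card (Fin k → Bool) : ℝ)⁻¹ ≤ 2⁻¹ := inv_anti₀ two_pos hcard
  linarith [infoCost_ge_of_errOn_le P herr]
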